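/- arXiv:1812.10753 — 3 statements merged into one kernel-verified Lean document; each statement's English description precedes it below -/
import Mathlib

section
/- With the setting of the rough-geodesic discretization: (X,d) a C_X-roughly geodesic ε-good δ-hyperbolic space, basepoint o, upper Gromov bound constant M, R > 5C_X, x ∈ X with nR ≤ d(o,x) < (n+1)R, and discretization points x_k on a rough geodesic from o to θ(x) with kR + C_X ≤ d(o,x_k) ≤ kR + 3C_X. There exists a constant C > 0, depending only on R, C_X, M, δ, such that for all k ∈ {0,…,n}: (n−k)R − C ≤ d(x_k, x) ≤ (n−k)R + C. -/
/-!
The lower bound is the triangle inequality through `o`, since `x_k` is within `3C_X` of the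
sphere of radius `kR` and `x` lies outside the sphere of radius `nR`. For the upper bound, go
through `x_n`: the rough geodesic gives `d(x_k, x_n) ≤ (n - k)R + C_X`, and the large Gromov
product `(x_n, x)_o ≥ nR - M - δ` forces `d(x_n, x) = d(o, x_n) + d(o, x) - 2 (x_n, x)_o` to be
at most `R + 3C_X + 2M + 2δ`, because `d(o, x_n)` and `d(o, x)` are both about `nR`.
-/

section GromovProduct

variable {X : Type*} [PseudoMetricSpace X]

noncomputable def gromovProduct (o y z : X) : ℝ := (dist o y + dist o z - dist y z) / 2

theorem dist_eq_sub_gromovProduct (o y z : X) :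
    dist y z = dist o y + dist o z - 2 * gromovProduct o y z := by
  unfold gromovProduct
  ring

end GromovProduct

/-- distance estimates d(x_k, x) = (n−k)R ± C for the discretization
points, with a constant C depending only on R, C_X, M, δ. -/
theorem stmt_2
    (R CX M δ : ℝ) (hR : R > 5 * CX) (hCX : 0 ≤ CX) (hM : 0 ≤ M) (hδ : 0 ≤ δ) :
    ∃ C > 0, ∀ (X : Type) (_ : MetricSpace X), ∀ (o x : X) (n : ℕ) (xk : ℕ → X),
      (n : ℝ) * R ≤ dist o x → dist o x < ((n : ℝ) + 1) * R →
      -- the discretization points satisfy kR + C_X ≤ d(o,x_k) ≤ kR + 3C_X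
      (∀ k : ℕ, k ≤ n →
        (k : ℝ) * R + CX ≤ dist o (xk k) ∧ dist o (xk k) ≤ (k : ℝ) * R + 3 * CX) →
      -- rough-geodesic estimate: d(x_k, x_n) is within C_X of (n−k)R
      (∀ k : ℕ, k ≤ n → |dist (xk k) (xk n) - ((n : ℝ) - (k : ℝ)) * R| ≤ CX) →
      -- previously established: (x_n, x)_o ≥ nR − M − δ
      (dist o (xk n) + dist o x - dist (xk n) x) / 2 ≥ (n : ℝ) * R - M - δ →
      ∀ k : ℕ, k ≤ n →
        ((n : ℝ) - (k : ℝ)) * R - C ≤ dist (xk k) x ∧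
        dist (xk k) x ≤ ((n : ℝ) - (k : ℝ)) * R + C := by
  refine ⟨R + 4 * CX + 2 * M + 2 * δ, by linarith, ?_⟩
  intro X _ o x n xk hx_ge hx_lt hxk hgeod hgromov k hk
  have hxn_x : dist (xk n) x ≤ R + 3 * CX + 2 * M + 2 * δ := by
    have hxn := (hxk n le_rfl).2
    have hgromov' : (n : ℝ) * R - M - δ ≤ gromovProduct o (xk n) x := hgromov
    linarith [dist_eq_sub_gromovProduct o (xk n) x]
  have hxk_xn : dist (xk k) (xk n) ≤ ((n : ℝ) - k) * R + CX := by
    linarith [(abs_le.mp (hgeod k hk)).2]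
  constructor
  · linarith [dist_triangle o (xk k) x, (hxk k hk).2]
  · calc dist (xk k) x ≤ dist (xk k) (xk n) + dist (xk n) x := dist_triangle _ _ _
      _ ≤ (((n : ℝ) - k) * R + CX) + (R + 3 * CX + 2 * M + 2 * δ) := add_le_add hxk_xn hxn_x
      _ = ((n : ℝ) - k) * R + (R + 4 * CX + 2 * M + 2 * δ) := by ring
end

section
/- Let Γ be a group acting by measure-class-preserving transformations on (∂X×∂X, ν_o⊗ν_o) diagonally, let ρ_s = π_s ⊗ π_s where π_s(γ)v(ξ) = e^{sαβ_ξ(o,γo)}v(γ^{-1}ξ), and for 0 ≤ s < ε/4 define b_s(γ)(ξ,η) = (β_ξ(o,γo) − β_η(o,γo)) / d_o(ξ,η)^{2sα/ε}. Then b_s satisfies the 1-cocycle identity b_s(γ₁γ₂) = b_s(γ₁) + ρ_s(γ₁)b_s(γ₂) for all γ₁,γ₂ ∈ Γ. -/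
/-- the map b_s(γ)(ξ,η) = (β_ξ(o,γo) − β_η(o,γo))/d_o(ξ,η)^{2sα/ε}
satisfies the 1-cocycle identity b_s(γ₁γ₂) = b_s(γ₁) + ρ_s(γ₁)b_s(γ₂) for
ρ_s(γ)F(ξ,η) = e^{sα(β_ξ(o,γo)+β_η(o,γo))} F(γ⁻¹ξ,γ⁻¹η). -/
theorem stmt_16
    {B : Type*} {Γ : Type*} [Group Γ] [MulAction Γ B]
    (ε α s : ℝ) (hε : 0 < ε) (hα : 0 < α) (hs0 : 0 ≤ s) (hs : s < ε / 4)
    (β : Γ → B → ℝ)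
    -- Busemann cocycle identity:
    (hcoc : ∀ (γ₁ γ₂ : Γ) (ξ : B), β (γ₁ * γ₂) ξ = β γ₁ ξ + β γ₂ (γ₁⁻¹ • ξ))
    (d : B → B → ℝ)
    (hd0 : ∀ ξ η : B, 0 ≤ d ξ η)
    (hdpos : ∀ ξ η : B, ξ ≠ η → 0 < d ξ η)
    -- conformal transformation rule of the visual metric:
    (hconf : ∀ (γ : Γ) (ξ η : B),
      d (γ⁻¹ • ξ) (γ⁻¹ • η) = d ξ η * Real.exp (ε / 2 * (β γ ξ + β γ η)))
    (b : Γ → B → B → ℝ)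
    (hb : ∀ (γ : Γ) (ξ η : B), b γ ξ η = (β γ ξ - β γ η) / d ξ η ^ (2 * s * α / ε)) :
    ∀ (γ₁ γ₂ : Γ) (ξ η : B),
      b (γ₁ * γ₂) ξ η =
        b γ₁ ξ η +
          Real.exp (s * α * (β γ₁ ξ + β γ₁ η)) * b γ₂ (γ₁⁻¹ • ξ) (γ₁⁻¹ • η) := by
  intro γ₁ γ₂ ξ η
  by_cases hne : ξ = η
  · subst hne
    simp [hb]
  · have hdp : 0 < d ξ η := hdpos _ _ hne
    set p := 2 * s * α / ε with hp
    have hexp : Real.exp (ε / 2 * (β γ₁ ξ + β γ₁ η)) ^ p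
        = Real.exp (s * α * (β γ₁ ξ + β γ₁ η)) := by
      rw [← Real.exp_one_rpow (ε / 2 * (β γ₁ ξ + β γ₁ η)),
        ← Real.rpow_mul (by positivity), Real.exp_one_rpow]
      congr 1
      field_simp [hp]
      rw [hp]
      linear_combination (2 * s * α * (β γ₁ ξ + β γ₁ η)) * mul_inv_cancel₀ (ne_of_gt hε)
    have hdγ : d (γ₁⁻¹ • ξ) (γ₁⁻¹ • η) ^ p
        = d ξ η ^ p * Real.exp (s * α * (β γ₁ ξ + β γ₁ η)) := by
      rw [hconf, Real.mul_rpow (le_of_lt hdp) (le_of_lt (Real.exp_pos _)), hexp]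
    have hdppos : 0 < d ξ η ^ p := Real.rpow_pos_of_pos hdp p
    rw [hb, hb, hb, hcoc γ₁ γ₂ ξ, hcoc γ₁ γ₂ η, hdγ]
    have hepos : (0:ℝ) < Real.exp (s * α * (β γ₁ ξ + β γ₁ η)) := Real.exp_pos _
    field_simp
    ring
end

section
/- Let λ_Γ be the left regular representation of a countable group Γ on ℓ²(Γ) and let π be a unitary representation of Γ on a Hilbert space H with a cyclic-type positivity property: assume (Shalom's lemma) that for every finitely supported positive measure μ on Γ, ‖λ_Γ(μ)‖_op ≤ ‖π(μ)‖_op. Suppose π satisfies the RD inequality: there exist R > 0 and a polynomial P with ‖π(f)‖_op ≤ P(n)‖f‖₂ for all f supported on S^Γ_{n,R}. Then Γ satisfies property RD: there exist C, d > 0 with ‖λ_Γ(f)‖_op ≤ C‖f‖_{H^d} for all finitely supported f, where ‖f‖²_{H^d} = Σ_γ |f(γ)|²(1+|γ|)^{2d}. -/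
private lemma sum_inv_sq_le (N : ℕ) :
    ∑ n ∈ Finset.range N, (1 / (1 + (n : ℝ)) ^ 2) ≤ 2 := by
  have h : ∀ N : ℕ, ∑ n ∈ Finset.range (N+1), (1 / (1 + (n : ℝ)) ^ 2) ≤ 2 - 1 / ((N : ℝ) + 1) := by
    intro N
    induction N with
    | zero => norm_num
    | succ N ih =>
      rw [Finset.sum_range_succ]
      have h1 : (0:ℝ) < (N:ℝ) + 1 := by positivity
      have h2 : (0:ℝ) < (N:ℝ) + 2 := by positivity
      have key : 1 / (1 + ((N:ℝ)+1)) ^ 2 ≤ 1 / ((N:ℝ) + 1) - 1 / ((N:ℝ) + 2) := by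
        rw [div_sub_div _ _ h1.ne' h2.ne', div_le_div_iff₀ (by positivity) (by positivity)]
        ring_nf
        nlinarith [sq_nonneg ((N:ℝ)+1)]
      push_cast
      push_cast at ih
      have e : 1/((N:ℝ)+1+1) = 1/((N:ℝ)+2) := by ring_nf
      linarith
  have hmono : ∑ n ∈ Finset.range N, (1 / (1 + (n : ℝ)) ^ 2)
      ≤ ∑ n ∈ Finset.range (N+1), (1 / (1 + (n : ℝ)) ^ 2) := by
    refine Finset.sum_le_sum_of_subset_of_nonneg ?_ ?_
    · exact Finset.range_subset_range.mpr (Nat.le_succ N)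
    · intro i _ _; positivity
  have h2 : 0 ≤ 1 / ((N : ℝ) + 1) := by positivity
  linarith [h N]

private lemma poly_bound (P : Polynomial ℝ) (x : ℝ) (hx : 0 ≤ x) :
    |P.eval x| ≤ (∑ i ∈ Finset.range (P.natDegree + 1), |P.coeff i|) * (1 + x) ^ P.natDegree := by
  rw [Polynomial.eval_eq_sum_range, Finset.sum_mul]
  refine (Finset.abs_sum_le_sum_abs _ _).trans (Finset.sum_le_sum ?_)
  intro i hi
  rw [abs_mul, abs_pow, abs_of_nonneg hx]
  have h1 : (1:ℝ) ≤ 1 + x := by linarith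
  have hle : x ^ i ≤ (1 + x) ^ P.natDegree :=
    calc x ^ i ≤ (1+x) ^ i := pow_le_pow_left₀ hx (by linarith) i
    _ ≤ (1+x) ^ P.natDegree := pow_le_pow_right₀ h1 (Nat.lt_succ_iff.mp (Finset.mem_range.mp hi))
  exact mul_le_mul_of_nonneg_left hle (abs_nonneg _)

private lemma filter_sum {Γ : Type*} {E : Type*} [AddCommMonoid E] (g : Γ →₀ ℂ)
    (p : Γ → Prop) [DecidablePred p] (h : Γ → ℂ → E) :
    (g.filter p).sum h = ∑ γ ∈ g.support.filter p, h γ (g γ) := by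
  rw [Finsupp.sum, Finsupp.support_filter]
  exact Finset.sum_congr rfl fun γ hγ => by
    rw [Finsupp.filter_apply_pos _ _ (Finset.mem_filter.mp hγ).2]


set_option maxHeartbeats 1000000 in
/-- if the regular representation λ is dominated by π on positive
functions (Shalom's lemma) and π satisfies the RD inequality on spheres, then Γ
has property RD. -/
theorem stmt_19
    {Γ : Type*} [Group Γ]
    {Hl : Type*} [NormedAddCommGroup Hl] [InnerProductSpace ℂ Hl]
    {Hp : Type*} [NormedAddCommGroup Hp] [InnerProductSpace ℂ Hp]
    (ℓ : Γ → ℝ) (hℓ0 : ℓ 1 = 0) (hℓinv : ∀ γ : Γ, ℓ γ⁻¹ = ℓ γ)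
    (hℓsub : ∀ γ₁ γ₂ : Γ, ℓ (γ₁ * γ₂) ≤ ℓ γ₁ + ℓ γ₂) (hℓpos : ∀ γ : Γ, 0 ≤ ℓ γ)
    (lam : Γ → Hl →L[ℂ] Hl) (pi : Γ → Hp →L[ℂ] Hp)
    -- λ and π are unitary representations:
    (hlam : ∀ γ₁ γ₂ : Γ, lam (γ₁ * γ₂) = (lam γ₁).comp (lam γ₂))
    (hpi : ∀ γ₁ γ₂ : Γ, pi (γ₁ * γ₂) = (pi γ₁).comp (pi γ₂))
    (hlamU : ∀ (γ : Γ) (v : Hl), ‖lam γ v‖ = ‖v‖)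
    (hpiU : ∀ (γ : Γ) (v : Hp), ‖pi γ v‖ = ‖v‖)
    -- for the regular representation, ‖λ(f)‖ ≤ ‖λ(|f|)‖:
    (hmod : ∀ f : Γ →₀ ℂ,
      ‖f.sum fun γ c => c • lam γ‖ ≤
        ‖(f.mapRange (fun c : ℂ => (‖c‖ : ℂ)) (by simp)).sum fun γ c => c • lam γ‖)
    -- Shalom's lemma: ‖λ(μ)‖ ≤ ‖π(μ)‖ for positive finitely supported μ:
    (hShalom : ∀ f : Γ →₀ ℂ, (∀ γ : Γ, f γ = (‖f γ‖ : ℂ)) →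
      ‖f.sum fun γ c => c • lam γ‖ ≤ ‖f.sum fun γ c => c • pi γ‖)
    -- π satisfies the RD inequality on spheres:
    (R : ℝ) (hR : 0 < R) (P : Polynomial ℝ)
    (hRD : ∀ (n : ℕ) (f : Γ →₀ ℂ),
      (∀ γ ∈ f.support, (n : ℝ) * R ≤ ℓ γ ∧ ℓ γ < ((n : ℝ) + 1) * R) →
      ‖f.sum fun γ c => c • pi γ‖ ≤
        P.eval (n : ℝ) * Real.sqrt (f.sum fun _ c => ‖c‖ ^ 2)) :
    -- Γ has property RD:
    ∃ C > 0, ∃ d > 0, ∀ f : Γ →₀ ℂ,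
      ‖f.sum fun γ c => c • lam γ‖ ≤
        C * Real.sqrt (f.sum fun γ c => ‖c‖ ^ 2 * (1 + ℓ γ) ^ (2 * d)) := by
  classical
  set D := P.natDegree with hD
  set A := ∑ i ∈ Finset.range (D+1), |P.coeff i| with hA
  have hA0 : 0 ≤ A := Finset.sum_nonneg fun i _ => abs_nonneg _
  set m := min 1 R with hm
  have hm0 : 0 < m := lt_min one_pos hR
  have hm1 : m ≤ 1 := min_le_left _ _
  have hmR : m ≤ R := min_le_right _ _
  set B := A / m ^ (D+1) with hB
  have hB0 : 0 ≤ B := div_nonneg hA0 (by positivity)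
  set K := 2 * B ^ 2 with hK
  have hK0 : 0 ≤ K := by positivity
  refine ⟨Real.sqrt K + 1, by positivity, D + 1, Nat.succ_pos _, ?_⟩
  intro f
  set g := f.mapRange (fun c : ℂ => (‖c‖ : ℂ)) (by simp) with hg
  have hgval : ∀ γ, g γ = (‖f γ‖ : ℂ) := fun γ => Finsupp.mapRange_apply
  have hgsupp : g.support = f.support := by
    ext γ
    simp [Finsupp.mem_support_iff, hgval γ, Complex.ofReal_eq_zero, norm_eq_zero]
  set idx : Γ → ℕ := fun γ => ⌊ℓ γ / R⌋₊ with hidx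
  have hidx_mem : ∀ γ n, idx γ = n → (n:ℝ) * R ≤ ℓ γ ∧ ℓ γ < ((n:ℝ)+1) * R := by
    intro γ n h
    have h0 : 0 ≤ ℓ γ / R := div_nonneg (hℓpos γ) hR.le
    have h2 := (Nat.floor_eq_iff h0).mp h
    exact ⟨(le_div_iff₀ hR).mp h2.1, (div_lt_iff₀ hR).mp h2.2⟩
  set T := Finset.range (g.support.sup idx + 1) with hT
  have hmapT : ∀ γ ∈ g.support, idx γ ∈ T := fun γ h =>
    Finset.mem_range.mpr (Nat.lt_succ_of_le (Finset.le_sup h))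
  set gn : ℕ → (Γ →₀ ℂ) := fun n => g.filter (fun γ => idx γ = n) with hgn
  set S : ℕ → ℝ := fun n => (gn n).sum (fun _ c => ‖c‖ ^ 2) with hS
  have hS0 : ∀ n, 0 ≤ S n := fun n => Finset.sum_nonneg fun _ _ => by positivity
  set Sob := f.sum (fun γ c => ‖c‖^2 * (1+ℓ γ)^(2*(D+1))) with hSob
  have hSob0 : 0 ≤ Sob := Finset.sum_nonneg fun γ _ =>
    mul_nonneg (by positivity) (pow_nonneg (by linarith [hℓpos γ]) _)
  -- positivity of gn n
  have hpos : ∀ n γ, (gn n) γ = (‖(gn n) γ‖ : ℂ) := by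
    intro n γ
    rw [hgn]
    rw [Finsupp.filter_apply]
    split
    · simp [hgval γ, Complex.norm_real, Real.norm_of_nonneg (norm_nonneg (f γ))]
    · simp
  -- splitting of the sum
  have hsplit : (g.sum fun γ c => c • lam γ) = ∑ n ∈ T, (gn n).sum (fun γ c => c • lam γ) := by
    rw [Finsupp.sum]
    rw [← Finset.sum_fiberwise_of_maps_to hmapT (fun γ => g γ • lam γ)]
    refine Finset.sum_congr rfl fun n _ => ?_
    simp only [hgn]
    exact (filter_sum g (fun γ => idx γ = n) (fun γ c => c • lam γ)).symm
  -- sphere-wise estimate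
  have h2 : ‖g.sum fun γ c => c • lam γ‖ ≤ ∑ n ∈ T, |P.eval (n:ℝ)| * Real.sqrt (S n) := by
    rw [hsplit]
    refine (norm_sum_le _ _).trans (Finset.sum_le_sum fun n _ => ?_)
    calc ‖(gn n).sum fun γ c => c • lam γ‖
        ≤ ‖(gn n).sum fun γ c => c • pi γ‖ := hShalom _ (hpos n)
      _ ≤ P.eval (n:ℝ) * Real.sqrt (S n) := by
          refine hRD n (gn n) fun γ hγ => ?_
          rw [hgn, Finsupp.support_filter] at hγ
          exact hidx_mem γ n (Finset.mem_filter.mp hγ).2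
      _ ≤ |P.eval (n:ℝ)| * Real.sqrt (S n) :=
          mul_le_mul_of_nonneg_right (le_abs_self _) (Real.sqrt_nonneg _)
  -- Cauchy-Schwarz data
  set a : ℕ → ℝ := fun n => |P.eval (n:ℝ)| / (1 + (n:ℝ) * R) ^ (D+1) with ha
  set b : ℕ → ℝ := fun n => (1 + (n:ℝ) * R) ^ (D+1) * Real.sqrt (S n) with hb
  have hx : ∀ n : ℕ, (0:ℝ) < (1 + (n:ℝ) * R) ^ (D+1) := fun n => by positivity
  have ha0 : ∀ n, 0 ≤ a n := fun n => div_nonneg (abs_nonneg _) (hx n).le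
  have hb0 : ∀ n, 0 ≤ b n := fun n => mul_nonneg (hx n).le (Real.sqrt_nonneg _)
  have hab : ∀ n : ℕ, |P.eval (n:ℝ)| * Real.sqrt (S n) = a n * b n := by
    intro n
    rw [ha, hb]
    field_simp
  have hCS : (∑ n ∈ T, a n * b n) ^ 2 ≤ (∑ n ∈ T, a n ^ 2) * (∑ n ∈ T, b n ^ 2) :=
    Finset.sum_mul_sq_le_sq_mul_sq T a b
  -- bound on sum of a^2
  have haB : ∀ n : ℕ, a n ≤ B / (1 + (n:ℝ)) := by
    intro n
    have hn0 : (0:ℝ) ≤ n := n.cast_nonneg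
    have hpb := poly_bound P n hn0
    rw [← hD, ← hA] at hpb
    have hgeom : m ^ (D+1) * (1 + (n:ℝ)) ^ (D+1) ≤ (1 + (n:ℝ) * R) ^ (D+1) := by
      rw [← mul_pow]
      refine pow_le_pow_left₀ (by positivity) ?_ (D+1)
      nlinarith
    have key : a n ≤ (A * (1+(n:ℝ))^D) / (m^(D+1) * (1+(n:ℝ))^(D+1)) := by
      rw [ha]
      exact div_le_div₀ (by positivity) hpb (by positivity) hgeom
    refine key.trans (le_of_eq ?_)
    rw [hB, pow_succ]
    field_simp
    ring
  have hsumA : ∑ n ∈ T, a n ^ 2 ≤ K := by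
    calc ∑ n ∈ T, a n ^ 2 ≤ ∑ n ∈ T, B^2 * (1/(1 + (n:ℝ))^2) := by
          refine Finset.sum_le_sum fun n _ => ?_
          have h1 : a n ^ 2 ≤ (B/(1+(n:ℝ)))^2 := pow_le_pow_left₀ (ha0 n) (haB n) 2
          refine h1.trans (le_of_eq ?_)
          rw [div_pow]
          ring
      _ = B^2 * ∑ n ∈ T, (1/(1 + (n:ℝ))^2) := by rw [Finset.mul_sum]
      _ ≤ B^2 * 2 := mul_le_mul_of_nonneg_left (sum_inv_sq_le _) (by positivity)
      _ = K := by rw [hK]; ring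
  -- bound on sum of b^2
  have hb2 : ∀ n, b n ^ 2 = (1+(n:ℝ)*R)^(2*(D+1)) * S n := by
    intro n
    rw [hb, mul_pow, Real.sq_sqrt (hS0 n), ← pow_mul, Nat.mul_comm (D+1) 2]
  have hsumB : ∑ n ∈ T, b n ^ 2 ≤ Sob := by
    calc ∑ n ∈ T, b n ^2
        = ∑ n ∈ T, ∑ γ ∈ g.support.filter (fun γ => idx γ = n),
            (1+(n:ℝ)*R)^(2*(D+1)) * ‖g γ‖^2 := by
          refine Finset.sum_congr rfl fun n _ => ?_
          rw [hb2 n]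
          simp only [hS, hgn]
          rw [filter_sum g (fun γ => idx γ = n) (fun _ c => ‖c‖^2), Finset.mul_sum]
      _ ≤ ∑ n ∈ T, ∑ γ ∈ g.support.filter (fun γ => idx γ = n),
            ‖g γ‖^2 * (1+ℓ γ)^(2*(D+1)) := by
          refine Finset.sum_le_sum fun n _ => Finset.sum_le_sum fun γ hγ => ?_
          have hidxγ := (Finset.mem_filter.mp hγ).2
          have hle := (hidx_mem γ n hidxγ).1
          have hnR : 0 ≤ (n:ℝ) * R := mul_nonneg n.cast_nonneg hR.le
          calc (1+(n:ℝ)*R)^(2*(D+1)) * ‖g γ‖^2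
              ≤ (1+ℓ γ)^(2*(D+1)) * ‖g γ‖^2 :=
                mul_le_mul_of_nonneg_right
                  (pow_le_pow_left₀ (show (0:ℝ) ≤ 1 + (n:ℝ)*R by positivity)
                    (show (1:ℝ)+(n:ℝ)*R ≤ 1 + ℓ γ by linarith) (2*(D+1)))
                  (by positivity)
            _ = ‖g γ‖^2 * (1+ℓ γ)^(2*(D+1)) := mul_comm _ _
      _ = ∑ γ ∈ g.support, ‖g γ‖^2 * (1+ℓ γ)^(2*(D+1)) :=
          Finset.sum_fiberwise_of_maps_to hmapT _
      _ = Sob := by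
          rw [hSob, Finsupp.sum, hgsupp]
          refine Finset.sum_congr rfl fun γ _ => ?_
          rw [hgval γ]
          simp
  -- assemble
  have h3 : ∑ n ∈ T, a n * b n ≤ Real.sqrt (K * Sob) := by
    have hab0 : 0 ≤ ∑ n ∈ T, a n * b n :=
      Finset.sum_nonneg fun n _ => mul_nonneg (ha0 n) (hb0 n)
    have hsq : (∑ n ∈ T, a n * b n)^2 ≤ K * Sob :=
      hCS.trans (mul_le_mul hsumA hsumB (Finset.sum_nonneg fun n _ => sq_nonneg _) hK0)
    calc ∑ n ∈ T, a n * b n = Real.sqrt ((∑ n ∈ T, a n * b n)^2) := (Real.sqrt_sq hab0).symm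
      _ ≤ Real.sqrt (K*Sob) := Real.sqrt_le_sqrt hsq
  calc ‖f.sum fun γ c => c • lam γ‖
      ≤ ‖g.sum fun γ c => c • lam γ‖ := hmod f
    _ ≤ ∑ n ∈ T, |P.eval (n:ℝ)| * Real.sqrt (S n) := h2
    _ = ∑ n ∈ T, a n * b n := Finset.sum_congr rfl fun n _ => hab n
    _ ≤ Real.sqrt (K * Sob) := h3
    _ = Real.sqrt K * Real.sqrt Sob := Real.sqrt_mul hK0 _
    _ ≤ (Real.sqrt K + 1) * Real.sqrt Sob := by nlinarith [Real.sqrt_nonneg Sob]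
end
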